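/- Under the assumptions of the fair-dual-bound lemma: f differentiable L-smooth, g_i convex differentiable, C compact convex, p > L, λ ≥ 0. Let x̃ := argmin_{x∈C} L_p(x, z, λ) and x(z) := argmin over {x ∈ C : g(x) ≤ 0} of f(x) + (p/2)‖x - z‖², with associated optimal multiplier λ(z) ≥ 0 satisfying strong duality (x(z) minimizes L_p(·, z, λ(z)) over C and λ(z)_i g_i(x(z)) = 0). Then (p - L)‖x̃ - x(z)‖² ≤ ⟨λ(z) - λ, g(x̃)⟩. -/

import Mathlib

/-!
A gradient that is `L`-Lipschitz makes `f` a `(-L)`-strongly convex function: along every line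
`t ↦ f (a + t • v) + L / 2 * ‖v‖ ^ 2 * t ^ 2` has a monotone derivative. Hence, for `μ ≥ 0`, the
proximal Lagrangian `L_p(·, z, μ)` is `(p - L)`-strongly convex, and at a minimizer over the
convex set `C` it grows at least quadratically. Apply this to `x̃` (for `λ`) and to `x(z)`
(for `λ(z)`) and add the two inequalities: the `f` and proximal terms cancel, complementary
slackness and feasibility of `x(z)` dispose of the terms in `g(x(z))`, and `⟨λ(z) - λ, g(x̃)⟩`
is what remains.
-/

open scoped RealInnerProductSpace
open Set Filter Topology

section StrongConvexity

variable {E : Type*} [NormedAddCommGroup E] [InnerProductSpace ℝ E]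

lemma StrongConvexOn.add {s : Set E} {m n : ℝ} {f g : E → ℝ}
    (hf : StrongConvexOn s m f) (hg : StrongConvexOn s n g) :
    StrongConvexOn s (m + n) (f + g) :=
  (UniformConvexOn.add hf hg).mono fun _ => le_of_eq (by simp only [Pi.add_apply]; ring)

lemma StrongConvexOn.subset {s t : Set E} {m : ℝ} {f : E → ℝ}
    (hf : StrongConvexOn t m f) (hst : s ⊆ t) (hs : Convex ℝ s) : StrongConvexOn s m f :=
  ⟨hs, fun _ hx _ hy => hf.2 (hst hx) (hst hy)⟩

lemma convexOn_sum {ι : Type*} {s : Set E} (hs : Convex ℝ s) (t : Finset ι) {F : ι → E → ℝ}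
    (hF : ∀ i ∈ t, ConvexOn ℝ s (F i)) : ConvexOn ℝ s (∑ i ∈ t, F i) :=
  Finset.sum_induction _ (ConvexOn ℝ s) (fun _ _ => ConvexOn.add) (convexOn_const 0 hs) hF

lemma strongConvexOn_univ_mul_norm_sub_sq (m : ℝ) (z : E) :
    StrongConvexOn univ m fun x => m / 2 * ‖x - z‖ ^ 2 := by
  rw [strongConvexOn_iff_convex]
  have haffine : (fun x : E => m / 2 * ‖x - z‖ ^ 2 - m / 2 * ‖x‖ ^ 2) =
      fun x => m / 2 * ‖z‖ ^ 2 - m * ⟪x, z⟫ := by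
    funext x
    rw [norm_sub_sq_real]
    ring
  rw [haffine]
  refine ⟨convex_univ, fun x _ y _ a b _ _ hab => le_of_eq ?_⟩
  simp only [inner_add_left, inner_smul_left, smul_eq_mul, RCLike.conj_to_real]
  linear_combination -(m / 2 * ‖z‖ ^ 2) * hab

lemma StrongConvexOn.add_sq_le_of_isMinOn {s : Set E} {m : ℝ} {f : E → ℝ} {x y : E}
    (hf : StrongConvexOn s m f) (hmin : IsMinOn f s x) (hx : x ∈ s) (hy : y ∈ s) :
    f x + m / 2 * ‖y - x‖ ^ 2 ≤ f y := by
  have hstep : ∀ t ∈ Ioo (0 : ℝ) 1, f x + (1 - t) * (m / 2 * ‖y - x‖ ^ 2) ≤ f y := by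
    rintro t ⟨ht₀, ht₁⟩
    have hconv := hf.2 hx hy (sub_nonneg.2 ht₁.le) ht₀.le (sub_add_cancel 1 t)
    have hle := isMinOn_iff.1 hmin _
      (hf.1 hx hy (sub_nonneg.2 ht₁.le) ht₀.le (sub_add_cancel 1 t))
    rw [norm_sub_rev] at hconv
    simp only [smul_eq_mul] at hconv
    have : t * (f x + (1 - t) * (m / 2 * ‖y - x‖ ^ 2)) ≤ t * f y := by nlinarith
    exact le_of_mul_le_mul_left this ht₀
  have hlim : Tendsto (fun t : ℝ => f x + (1 - t) * (m / 2 * ‖y - x‖ ^ 2)) (𝓝[>] 0)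
      (𝓝 (f x + m / 2 * ‖y - x‖ ^ 2)) := by
    have : Continuous fun t : ℝ => f x + (1 - t) * (m / 2 * ‖y - x‖ ^ 2) := by fun_prop
    simpa using (this.tendsto 0).mono_left nhdsWithin_le_nhds
  exact le_of_tendsto hlim (eventually_of_mem (Ioo_mem_nhdsGT one_pos) hstep)

end StrongConvexity

section LipschitzGradient

variable {E : Type*} [NormedAddCommGroup E] [InnerProductSpace ℝ E] [CompleteSpace E]

lemma HasGradientAt.hasDerivAt_comp_add_smul {f : E → ℝ} {f' a v : E} {t : ℝ}
    (hf : HasGradientAt f f' (a + t • v)) :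
    HasDerivAt (fun s : ℝ => f (a + s • v)) ⟪f', v⟫ t := by
  have hline : HasDerivAt (fun s : ℝ => a + s • v) v t := by
    simpa using ((hasDerivAt_id t).smul_const v).const_add a
  exact hf.hasFDerivAt.comp_hasDerivAt t hline

variable {f : E → ℝ} {f' : E → E} {L : ℝ}

lemma convexOn_univ_comp_add_smul_add_sq (hf : ∀ x, HasGradientAt f (f' x) x)
    (hlip : ∀ x y, ‖f' x - f' y‖ ≤ L * ‖x - y‖) (a v : E) :
    ConvexOn ℝ univ fun t : ℝ => f (a + t • v) + L / 2 * ‖v‖ ^ 2 * t ^ 2 := by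
  have hderiv : ∀ t : ℝ, HasDerivAt (fun t : ℝ => f (a + t • v) + L / 2 * ‖v‖ ^ 2 * t ^ 2)
      (⟪f' (a + t • v), v⟫ + L * ‖v‖ ^ 2 * t) t := fun t => by
    refine ((hf (a + t • v)).hasDerivAt_comp_add_smul.add
      ((hasDerivAt_pow 2 t).const_mul (L / 2 * ‖v‖ ^ 2))).congr_deriv ?_
    norm_num
    ring
  refine Monotone.convexOn_univ_of_deriv (fun t => (hderiv t).differentiableAt) ?_
  rw [funext fun t => (hderiv t).deriv]
  intro s t hst
  have hgap : ‖f' (a + s • v) - f' (a + t • v)‖ ≤ L * ((t - s) * ‖v‖) := by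
    have hdist : ‖a + s • v - (a + t • v)‖ = (t - s) * ‖v‖ := by
      rw [add_sub_add_left_eq_sub, ← sub_smul, norm_smul, Real.norm_eq_abs,
        abs_of_nonpos (sub_nonpos.2 hst), neg_sub]
    exact hdist ▸ hlip _ _
  have hinner : ⟪f' (a + s • v) - f' (a + t • v), v⟫ ≤ L * (t - s) * ‖v‖ ^ 2 :=
    calc ⟪f' (a + s • v) - f' (a + t • v), v⟫
        ≤ ‖f' (a + s • v) - f' (a + t • v)‖ * ‖v‖ := real_inner_le_norm _ _
      _ ≤ L * ((t - s) * ‖v‖) * ‖v‖ := mul_le_mul_of_nonneg_right hgap (norm_nonneg v)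
      _ = L * (t - s) * ‖v‖ ^ 2 := by ring
  rw [inner_sub_left] at hinner
  linarith

lemma strongConvexOn_univ_neg_of_lipschitz_gradient (hf : ∀ x, HasGradientAt f (f' x) x)
    (hlip : ∀ x y, ‖f' x - f' y‖ ≤ L * ‖x - y‖) :
    StrongConvexOn univ (-L) f := by
  refine ⟨convex_univ, fun a _ b _ s t hs ht hst => ?_⟩
  have hline := (convexOn_univ_comp_add_smul_add_sq hf hlip a (b - a)).2 (mem_univ 0)
    (mem_univ 1) hs ht hst
  obtain rfl : s = 1 - t := by linarith
  have hpoint : a + t • (b - a) = (1 - t) • a + t • b := by module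
  simp only [smul_eq_mul, mul_zero, zero_add, mul_one, hpoint, zero_smul, one_smul, add_zero,
    add_sub_cancel] at hline
  rw [norm_sub_rev] at hline
  simp only [smul_eq_mul]
  linear_combination hline

lemma strongConvexOn_univ_proximal_lagrangian {ι : Type*} [Fintype ι] {g : ι → E → ℝ}
    {μ : ι → ℝ} (hf : ∀ x, HasGradientAt f (f' x) x)
    (hlip : ∀ x y, ‖f' x - f' y‖ ≤ L * ‖x - y‖) (hg : ∀ i, ConvexOn ℝ univ (g i))
    (hμ : ∀ i, 0 ≤ μ i) (p : ℝ) (z : E) :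
    StrongConvexOn univ (p - L) fun x => f x + ∑ i, μ i * g i x + p / 2 * ‖x - z‖ ^ 2 := by
  have hsum : ConvexOn ℝ univ fun x => ∑ i, μ i * g i x := by
    convert convexOn_sum convex_univ Finset.univ fun i _ => (hg i).smul (hμ i) using 1
    funext x
    simp only [Finset.sum_apply, smul_eq_mul]
  have h := ((strongConvexOn_univ_neg_of_lipschitz_gradient hf hlip).add
    (strongConvexOn_zero.2 hsum)).add (strongConvexOn_univ_mul_norm_sub_sq p z)
  rwa [show -L + 0 + p = p - L by ring] at h

end LipschitzGradient

theorem dual_gap_bound_general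
    {n m : ℕ} (f : EuclideanSpace ℝ (Fin n) → ℝ)
    (f' : EuclideanSpace ℝ (Fin n) → EuclideanSpace ℝ (Fin n))
    (g : Fin m → EuclideanSpace ℝ (Fin n) → ℝ)
    (L p : ℝ)
    (C : Set (EuclideanSpace ℝ (Fin n))) (hCconv : Convex ℝ C)
    (hdiff : ∀ x, HasGradientAt f (f' x) x)
    (hlip : ∀ x x', ‖f' x - f' x'‖ ≤ L * ‖x - x'‖)
    (hgconv : ∀ i, ConvexOn ℝ Set.univ (g i))
    (Lp : EuclideanSpace ℝ (Fin n) → EuclideanSpace ℝ (Fin n) → (Fin m → ℝ) → ℝ)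
    (hLp : ∀ x z lam, Lp x z lam = f x + (∑ i, lam i * g i x) + p / 2 * ‖x - z‖ ^ 2)
    (z : EuclideanSpace ℝ (Fin n))
    (lam : Fin m → ℝ) (hlam : ∀ i, 0 ≤ lam i)
    (xtilde : EuclideanSpace ℝ (Fin n)) (hxtilde : xtilde ∈ C)
    (hxtilde_min : ∀ u ∈ C, Lp xtilde z lam ≤ Lp u z lam)
    (xz : EuclideanSpace ℝ (Fin n)) (hxz : xz ∈ C) (hxz_feas : ∀ i, g i xz ≤ 0)
    (lamz : Fin m → ℝ) (hlamz : ∀ i, 0 ≤ lamz i)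
    (hlamz_min : ∀ u ∈ C, Lp xz z lamz ≤ Lp u z lamz)
    (hlamz_cs : ∀ i, lamz i * g i xz = 0) :
    (p - L) * ‖xtilde - xz‖ ^ 2 ≤ ∑ i, (lamz i - lam i) * g i xtilde := by
  have hconv : ∀ μ : Fin m → ℝ, (∀ i, 0 ≤ μ i) → StrongConvexOn C (p - L) fun x => Lp x z μ :=
    fun μ hμ => by
      simp only [hLp]
      exact (strongConvexOn_univ_proximal_lagrangian hdiff hlip hgconv hμ p z).subset
        (subset_univ C) hCconv
  have hgrowth_tilde := (hconv lam hlam).add_sq_le_of_isMinOn (isMinOn_iff.2 hxtilde_min)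
    hxtilde hxz
  have hgrowth_xz := (hconv lamz hlamz).add_sq_le_of_isMinOn (isMinOn_iff.2 hlamz_min)
    hxz hxtilde
  have hslack : ∑ i, lamz i * g i xz = 0 := Finset.sum_eq_zero fun i _ => hlamz_cs i
  have hfeas : ∑ i, lam i * g i xz ≤ 0 :=
    Finset.sum_nonpos fun i _ => mul_nonpos_of_nonneg_of_nonpos (hlam i) (hxz_feas i)
  simp only [hLp] at hgrowth_tilde hgrowth_xz
  rw [norm_sub_rev xz xtilde] at hgrowth_tilde
  simp only [sub_mul, Finset.sum_sub_distrib]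
  linarith

/-- Key dual bound: `(p-L)‖x̃ - x(z)‖² ≤ ⟨λ(z) - λ, g(x̃)⟩`, where `x̃` minimizes
`L_p(·, z, λ)` over `C` and `(x(z), λ(z))` is a primal-dual pair for the constrained
proximal problem. -/
theorem dual_gap_bound
    {n m : ℕ} (f : EuclideanSpace ℝ (Fin n) → ℝ)
    (f' : EuclideanSpace ℝ (Fin n) → EuclideanSpace ℝ (Fin n))
    (g : Fin m → EuclideanSpace ℝ (Fin n) → ℝ)
    (L p : ℝ) (hL : 0 ≤ L) (hp : L < p)
    (C : Set (EuclideanSpace ℝ (Fin n))) (hCcompact : IsCompact C) (hCconv : Convex ℝ C)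
    (hdiff : ∀ x, HasGradientAt f (f' x) x)
    (hlip : ∀ x x', ‖f' x - f' x'‖ ≤ L * ‖x - x'‖)
    (hgconv : ∀ i, ConvexOn ℝ Set.univ (g i))
    (Lp : EuclideanSpace ℝ (Fin n) → EuclideanSpace ℝ (Fin n) → (Fin m → ℝ) → ℝ)
    (hLp : ∀ x z lam, Lp x z lam = f x + (∑ i, lam i * g i x) + p / 2 * ‖x - z‖ ^ 2)
    (z : EuclideanSpace ℝ (Fin n))
    (lam : Fin m → ℝ) (hlam : ∀ i, 0 ≤ lam i)
    (xtilde : EuclideanSpace ℝ (Fin n)) (hxtilde : xtilde ∈ C)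
    (hxtilde_min : ∀ u ∈ C, Lp xtilde z lam ≤ Lp u z lam)
    (xz : EuclideanSpace ℝ (Fin n)) (hxz : xz ∈ C) (hxz_feas : ∀ i, g i xz ≤ 0)
    (hxz_min : ∀ u ∈ C, (∀ i, g i u ≤ 0) →
      f xz + p / 2 * ‖xz - z‖ ^ 2 ≤ f u + p / 2 * ‖u - z‖ ^ 2)
    (lamz : Fin m → ℝ) (hlamz : ∀ i, 0 ≤ lamz i)
    (hlamz_min : ∀ u ∈ C, Lp xz z lamz ≤ Lp u z lamz)
    (hlamz_cs : ∀ i, lamz i * g i xz = 0) :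
    (p - L) * ‖xtilde - xz‖ ^ 2 ≤ ∑ i, (lamz i - lam i) * g i xtilde :=
  dual_gap_bound_general f f' g L p C hCconv hdiff hlip hgconv Lp hLp z lam hlam xtilde hxtilde
    hxtilde_min xz hxz hxz_feas lamz hlamz hlamz_min hlamz_cs
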